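/- arXiv:2405.15402 — 7 statements merged into one kernel-verified Lean document; each statement's English description precedes it below -/
import Mathlib

section
/- If Ψ : K → ℝᵐ is ∂**-convex on a convex set K ⊆ ℝⁿ, then Ψ is convex along segments in the generalized sense: for all p, q ∈ K and μ ∈ [0,1], Ψ(q + μ(p − q)) ≤ Ψ(q) + μ(Ψ(p) − Ψ(q)) componentwise. -/
open scoped RealInnerProductSpace

theorem convexOn_of_forall_exists_inner_le {E : Type*} [NormedAddCommGroup E]
    [InnerProductSpace ℝ E] {K : Set E} (hK : Convex ℝ K) {f : E → ℝ}
    (hsub : ∀ z ∈ K, ∃ ξ : E, ∀ x ∈ K, ⟪ξ, x - z⟫ ≤ f x - f z) : ConvexOn ℝ K f := by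
  refine ⟨hK, fun x hx y hy a b ha hb hab => ?_⟩
  set z := a • x + b • y
  obtain ⟨ξ, hξ⟩ := hsub z (hK hx hy ha hb hab)
  have hx' := mul_le_mul_of_nonneg_left (hξ x hx) ha
  have hy' := mul_le_mul_of_nonneg_left (hξ y hy) hb
  have hcancel : a * ⟪ξ, x - z⟫ + b * ⟪ξ, y - z⟫ = 0 := by
    rw [← real_inner_smul_right, ← real_inner_smul_right, ← inner_add_right]
    convert inner_zero_right ξ using 2
    calc a • (x - z) + b • (y - z) = z - (a + b) • z := by module
      _ = 0 := by rw [hab, one_smul, sub_self]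
  have hfz : f z = a * f z + b * f z := by rw [← add_mul, hab, one_mul]
  simp only [smul_eq_mul]
  linarith

/-- a ∂**-convex vector function is convex along segments. -/
theorem stmt4 {n m : ℕ} (K : Set (EuclideanSpace ℝ (Fin n))) (hK : Convex ℝ K)
    (Ψ : EuclideanSpace ℝ (Fin n) → Fin m → ℝ)
    (D : EuclideanSpace ℝ (Fin n) → Fin m → Set (EuclideanSpace ℝ (Fin n)))
    (hne : ∀ z ∈ K, ∀ i, (D z i).Nonempty)
    (hconv : ∀ z ∈ K, ∀ x ∈ K, ∀ ξ : Fin m → EuclideanSpace ℝ (Fin n),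
      (∀ i, ξ i ∈ D z i) → ∀ i, ⟪ξ i, x - z⟫ ≤ Ψ x i - Ψ z i) :
    ∀ p ∈ K, ∀ q ∈ K, ∀ μ ∈ Set.Icc (0:ℝ) 1, ∀ i,
      Ψ (q + μ • (p - q)) i ≤ Ψ q i + μ * (Ψ p i - Ψ q i) := by
  rintro p hp q hq μ ⟨hμ0, hμ1⟩ i
  have hΨi : ConvexOn ℝ K (Ψ · i) := by
    refine convexOn_of_forall_exists_inner_le hK fun z hz => ?_
    choose ξ hξ using hne z hz
    exact ⟨ξ i, fun x hx => hconv z hz x hx ξ hξ i⟩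
  have h := hΨi.2 hq hp (sub_nonneg.2 hμ1) hμ0 (sub_add_cancel 1 μ)
  have hpt : q + μ • (p - q) = (1 - μ) • q + μ • p := by module
  rw [hpt]
  simp only [smul_eq_mul] at h
  linarith
end

section
/- Let K ⊆ ℝⁿ be convex and Ψ : K → ℝᵐ be ∂**-convex on K with nonempty convexificators. If p̄ ∈ K solves the Stampacchia ∂**-vector variational inequality (for every q ∈ K there exists ξ ∈ ∂**Ψ(p̄) with ⟨ξ, q − p̄⟩ₘ ∉ −ℝ₊ᵐ∖{0}), then p̄ solves the Minty ∂**-vector variational inequality: for every q ∈ K and every ζ ∈ ∂**Ψ(q), ⟨ζ, p̄ − q⟩ₘ ∉ ℝ₊ᵐ∖{0}. -/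
/-! Adding the ∂**-convexity inequalities at `pbar` (with `ξ`) and at `q` (with `ζ`) gives
`⟨ξ, q - pbar⟩ₘ ≤ -⟨ζ, pbar - q⟩ₘ`; hence if `ζ` violated the Minty inequality at `q`, then
`ξ` would violate the Stampacchia inequality at `q`. -/

open scoped RealInnerProductSpace

theorem stmt6_general {n m : ℕ} (K : Set (EuclideanSpace ℝ (Fin n)))
    (Ψ : EuclideanSpace ℝ (Fin n) → Fin m → ℝ)
    (D : EuclideanSpace ℝ (Fin n) → Fin m → Set (EuclideanSpace ℝ (Fin n)))
    (hconv : ∀ z ∈ K, ∀ x ∈ K, ∀ ξ : Fin m → EuclideanSpace ℝ (Fin n),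
      (∀ i, ξ i ∈ D z i) → ∀ i, ⟪ξ i, x - z⟫ ≤ Ψ x i - Ψ z i)
    (pbar : EuclideanSpace ℝ (Fin n)) (hpbar : pbar ∈ K)
    (hStamp : ∀ q ∈ K, ∃ ξ : Fin m → EuclideanSpace ℝ (Fin n),
      (∀ i, ξ i ∈ D pbar i) ∧
      ¬ ((∀ i, ⟪ξ i, q - pbar⟫ ≤ 0) ∧ (fun i => ⟪ξ i, q - pbar⟫) ≠ 0)) :
    ∀ q ∈ K, ∀ ζ : Fin m → EuclideanSpace ℝ (Fin n), (∀ i, ζ i ∈ D q i) →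
      ¬ ((∀ i, 0 ≤ ⟪ζ i, pbar - q⟫) ∧ (fun i => ⟪ζ i, pbar - q⟫) ≠ 0) := by
  rintro q hq ζ hζ ⟨hMinty_nonneg, hMinty_ne⟩
  obtain ⟨ξ, hξ, hStamp_q⟩ := hStamp q hq
  have hmono : (fun i => ⟪ξ i, q - pbar⟫) ≤ -fun i => ⟪ζ i, pbar - q⟫ := fun i => by
    simp only [Pi.neg_apply]
    linarith [hconv pbar hpbar q hq ξ hξ i, hconv q hq pbar hpbar ζ hζ i]
  have hMinty_pos : 0 < fun i => ⟪ζ i, pbar - q⟫ :=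
    lt_of_le_of_ne hMinty_nonneg hMinty_ne.symm
  have hStamp_neg : (fun i => ⟪ξ i, q - pbar⟫) < 0 := hmono.trans_lt (neg_neg_of_pos hMinty_pos)
  exact hStamp_q ⟨hStamp_neg.le, hStamp_neg.ne⟩

/-- under ∂**-convexity, a solution of the Stampacchia ∂**-VVI is a
solution of the Minty ∂**-VVI. -/
theorem stmt6 {n m : ℕ} (K : Set (EuclideanSpace ℝ (Fin n))) (hK : Convex ℝ K)
    (Ψ : EuclideanSpace ℝ (Fin n) → Fin m → ℝ)
    (D : EuclideanSpace ℝ (Fin n) → Fin m → Set (EuclideanSpace ℝ (Fin n)))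
    (hne : ∀ z ∈ K, ∀ i, (D z i).Nonempty)
    (hconv : ∀ z ∈ K, ∀ x ∈ K, ∀ ξ : Fin m → EuclideanSpace ℝ (Fin n),
      (∀ i, ξ i ∈ D z i) → ∀ i, ⟪ξ i, x - z⟫ ≤ Ψ x i - Ψ z i)
    (pbar : EuclideanSpace ℝ (Fin n)) (hpbar : pbar ∈ K)
    (hStamp : ∀ q ∈ K, ∃ ξ : Fin m → EuclideanSpace ℝ (Fin n),
      (∀ i, ξ i ∈ D pbar i) ∧
      ¬ ((∀ i, ⟪ξ i, q - pbar⟫ ≤ 0) ∧ (fun i => ⟪ξ i, q - pbar⟫) ≠ 0)) :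
    ∀ q ∈ K, ∀ ζ : Fin m → EuclideanSpace ℝ (Fin n), (∀ i, ζ i ∈ D q i) →
      ¬ ((∀ i, 0 ≤ ⟪ζ i, pbar - q⟫) ∧ (fun i => ⟪ζ i, pbar - q⟫) ≠ 0) :=
  stmt6_general K Ψ D hconv pbar hpbar hStamp
end

section
/- Let K ⊆ ℝⁿ be convex and Ψ : K → ℝᵐ be ∂**-convex at p̄ ∈ K with nonempty convexificator ∂**Ψ(p̄). If p̄ solves the Stampacchia ∂**-vector variational inequality (for every q ∈ K there exists ξ ∈ ∂**Ψ(p̄) with ⟨ξ, q − p̄⟩ₘ ∉ −ℝ₊ᵐ∖{0}), then p̄ is an efficient solution of the vector optimization problem min Ψ: there is no q ∈ K with Ψ(q) − Ψ(p̄) ∈ −ℝ₊ᵐ∖{0}. -/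
open Filter Topology Set
open scoped RealInnerProductSpace

theorem eq_of_le_of_le_of_not_lt {α : Type*} [PartialOrder α] {a b c : α}
    (hab : a ≤ b) (hbc : b ≤ c) (hac : ¬ a < c) : b = c :=
  have hac_eq : a = c := ((hab.trans hbc).lt_or_eq).resolve_left hac
  hbc.antisymm (hac_eq ▸ hab)

theorem stmt7_general {n m : ℕ} (K : Set (EuclideanSpace ℝ (Fin n)))
    (Ψ : EuclideanSpace ℝ (Fin n) → Fin m → ℝ)
    (D : EuclideanSpace ℝ (Fin n) → Fin m → Set (EuclideanSpace ℝ (Fin n)))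
    (pbar : EuclideanSpace ℝ (Fin n))
    (hconv : ∀ q ∈ K, ∀ ξ : Fin m → EuclideanSpace ℝ (Fin n),
      (∀ i, ξ i ∈ D pbar i) → ∀ i, ⟪ξ i, q - pbar⟫ ≤ Ψ q i - Ψ pbar i)
    (hStamp : ∀ q ∈ K, ∃ ξ : Fin m → EuclideanSpace ℝ (Fin n),
      (∀ i, ξ i ∈ D pbar i) ∧
      ¬ ((∀ i, ⟪ξ i, q - pbar⟫ ≤ 0) ∧ (fun i => ⟪ξ i, q - pbar⟫) ≠ 0)) :
    ∀ q ∈ K, ¬ ((∀ i, Ψ q i ≤ Ψ pbar i) ∧ Ψ q ≠ Ψ pbar) := by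
  rintro q hq ⟨hle, hne⟩
  obtain ⟨ξ, hξ, hnot_neg⟩ := hStamp q hq
  have hle_diff : (fun i => ⟪ξ i, q - pbar⟫) ≤ Ψ q - Ψ pbar := hconv q hq ξ hξ
  have hdiff_nonpos : Ψ q - Ψ pbar ≤ 0 := fun i => sub_nonpos.mpr (hle i)
  have hnot_lt : ¬ (fun i => ⟪ξ i, q - pbar⟫) < 0 := by
    rwa [lt_iff_le_and_ne]
  exact hne (sub_eq_zero.mp (eq_of_le_of_le_of_not_lt hle_diff hdiff_nonpos hnot_lt))

/-- under ∂**-convexity at p̄, a solution of the Stampacchia ∂**-VVI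
is an efficient solution of the vector optimization problem. -/
theorem stmt7 {n m : ℕ} (K : Set (EuclideanSpace ℝ (Fin n))) (hK : Convex ℝ K)
    (Ψ : EuclideanSpace ℝ (Fin n) → Fin m → ℝ)
    (D : EuclideanSpace ℝ (Fin n) → Fin m → Set (EuclideanSpace ℝ (Fin n)))
    (pbar : EuclideanSpace ℝ (Fin n)) (hpbar : pbar ∈ K)
    (hne : ∀ i, (D pbar i).Nonempty)
    (hconv : ∀ q ∈ K, ∀ ξ : Fin m → EuclideanSpace ℝ (Fin n),
      (∀ i, ξ i ∈ D pbar i) → ∀ i, ⟪ξ i, q - pbar⟫ ≤ Ψ q i - Ψ pbar i)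
    (hStamp : ∀ q ∈ K, ∃ ξ : Fin m → EuclideanSpace ℝ (Fin n),
      (∀ i, ξ i ∈ D pbar i) ∧
      ¬ ((∀ i, ⟪ξ i, q - pbar⟫ ≤ 0) ∧ (fun i => ⟪ξ i, q - pbar⟫) ≠ 0)) :
    ∀ q ∈ K, ¬ ((∀ i, Ψ q i ≤ Ψ pbar i) ∧ Ψ q ≠ Ψ pbar) :=
  stmt7_general K Ψ D pbar hconv hStamp
end

section
/- Let K ⊆ ℝⁿ be convex and Ψ : K → ℝᵐ be ∂**-convex at p̄ ∈ K with nonempty convexificator. If p̄ solves the Stampacchia weak ∂**-vector variational inequality (for every q ∈ K there exists ξ ∈ ∂**Ψ(p̄) with ⟨ξ, q − p̄⟩ₘ ∉ −int ℝ₊ᵐ), then p̄ is a weakly efficient solution of the vector optimization problem: there is no q ∈ K with Ψ(q) − Ψ(p̄) ∈ −int ℝ₊ᵐ (all components strictly negative). -/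
open scoped RealInnerProductSpace

theorem stmt8_general {n m : ℕ} (K : Set (EuclideanSpace ℝ (Fin n)))
    (Ψ : EuclideanSpace ℝ (Fin n) → Fin m → ℝ)
    (D : EuclideanSpace ℝ (Fin n) → Fin m → Set (EuclideanSpace ℝ (Fin n)))
    (pbar : EuclideanSpace ℝ (Fin n))
    (hconv : ∀ q ∈ K, ∀ ξ : Fin m → EuclideanSpace ℝ (Fin n),
      (∀ i, ξ i ∈ D pbar i) → ∀ i, ⟪ξ i, q - pbar⟫ ≤ Ψ q i - Ψ pbar i)
    (hStamp : ∀ q ∈ K, ∃ ξ : Fin m → EuclideanSpace ℝ (Fin n),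
      (∀ i, ξ i ∈ D pbar i) ∧ ¬ (∀ i, ⟪ξ i, q - pbar⟫ < 0)) :
    ∀ q ∈ K, ¬ (∀ i, Ψ q i < Ψ pbar i) := by
  intro q hq hdescent
  obtain ⟨ξ, hξ, hnot⟩ := hStamp q hq
  exact hnot fun i => (hconv q hq ξ hξ i).trans_lt (sub_neg.mpr (hdescent i))

/-- under ∂**-convexity at p̄, a solution of the Stampacchia weak
∂**-VVI is a weakly efficient solution of the vector optimization problem. -/
theorem stmt8 {n m : ℕ} (K : Set (EuclideanSpace ℝ (Fin n))) (hK : Convex ℝ K)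
    (Ψ : EuclideanSpace ℝ (Fin n) → Fin m → ℝ)
    (D : EuclideanSpace ℝ (Fin n) → Fin m → Set (EuclideanSpace ℝ (Fin n)))
    (pbar : EuclideanSpace ℝ (Fin n)) (hpbar : pbar ∈ K)
    (hne : ∀ i, (D pbar i).Nonempty)
    (hconv : ∀ q ∈ K, ∀ ξ : Fin m → EuclideanSpace ℝ (Fin n),
      (∀ i, ξ i ∈ D pbar i) → ∀ i, ⟪ξ i, q - pbar⟫ ≤ Ψ q i - Ψ pbar i)
    (hStamp : ∀ q ∈ K, ∃ ξ : Fin m → EuclideanSpace ℝ (Fin n),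
      (∀ i, ξ i ∈ D pbar i) ∧ ¬ (∀ i, ⟪ξ i, q - pbar⟫ < 0)) :
    ∀ q ∈ K, ¬ (∀ i, Ψ q i < Ψ pbar i) :=
  stmt8_general K Ψ D pbar hconv hStamp
end

section
/- Let K ⊆ ℝⁿ be convex and Ψ : K → ℝᵐ be ∂**-convex on K with nonempty convexificators. If p̄ solves the Stampacchia weak ∂**-vector variational inequality (for every q ∈ K there exists ξ ∈ ∂**Ψ(p̄) with ⟨ξ, q − p̄⟩ₘ ∉ −int ℝ₊ᵐ), then p̄ solves the Minty weak ∂**-vector variational inequality: for every q ∈ K and every ζ ∈ ∂**Ψ(q), ⟨ζ, p̄ − q⟩ₘ ∉ int ℝ₊ᵐ. -/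
open scoped RealInnerProductSpace

/-- The monotonicity of the convexificator that ∂**-convexity implies. -/
theorem inner_add_inner_le_zero_of_le_sub {E : Type*} [NormedAddCommGroup E]
    [InnerProductSpace ℝ E] {f : E → ℝ} {p q ξ ζ : E}
    (hξ : ⟪ξ, q - p⟫ ≤ f q - f p) (hζ : ⟪ζ, p - q⟫ ≤ f p - f q) :
    ⟪ξ, q - p⟫ + ⟪ζ, p - q⟫ ≤ 0 := by
  linarith

theorem stmt10_general {n m : ℕ} (K : Set (EuclideanSpace ℝ (Fin n)))
    (Ψ : EuclideanSpace ℝ (Fin n) → Fin m → ℝ)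
    (D : EuclideanSpace ℝ (Fin n) → Fin m → Set (EuclideanSpace ℝ (Fin n)))
    (hconv : ∀ z ∈ K, ∀ x ∈ K, ∀ ξ : Fin m → EuclideanSpace ℝ (Fin n),
      (∀ i, ξ i ∈ D z i) → ∀ i, ⟪ξ i, x - z⟫ ≤ Ψ x i - Ψ z i)
    (pbar : EuclideanSpace ℝ (Fin n)) (hpbar : pbar ∈ K)
    (hStamp : ∀ q ∈ K, ∃ ξ : Fin m → EuclideanSpace ℝ (Fin n),
      (∀ i, ξ i ∈ D pbar i) ∧ ¬ (∀ i, ⟪ξ i, q - pbar⟫ < 0)) :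
    ∀ q ∈ K, ∀ ζ : Fin m → EuclideanSpace ℝ (Fin n), (∀ i, ζ i ∈ D q i) →
      ¬ (∀ i, 0 < ⟪ζ i, pbar - q⟫) := by
  intro q hq ζ hζ hζ_pos
  obtain ⟨ξ, hξ, hξ_not_neg⟩ := hStamp q hq
  refine hξ_not_neg fun i => ?_
  have hmono := inner_add_inner_le_zero_of_le_sub (f := fun x => Ψ x i)
    (hconv pbar hpbar q hq ξ hξ i) (hconv q hq pbar hpbar ζ hζ i)
  linarith [hζ_pos i]

/-- under ∂**-convexity, a solution of the Stampacchia weak ∂**-VVI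
solves the Minty weak ∂**-VVI. -/
theorem stmt10 {n m : ℕ} (K : Set (EuclideanSpace ℝ (Fin n))) (hK : Convex ℝ K)
    (Ψ : EuclideanSpace ℝ (Fin n) → Fin m → ℝ)
    (D : EuclideanSpace ℝ (Fin n) → Fin m → Set (EuclideanSpace ℝ (Fin n)))
    (hne : ∀ z ∈ K, ∀ i, (D z i).Nonempty)
    (hconv : ∀ z ∈ K, ∀ x ∈ K, ∀ ξ : Fin m → EuclideanSpace ℝ (Fin n),
      (∀ i, ξ i ∈ D z i) → ∀ i, ⟪ξ i, x - z⟫ ≤ Ψ x i - Ψ z i)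
    (pbar : EuclideanSpace ℝ (Fin n)) (hpbar : pbar ∈ K)
    (hStamp : ∀ q ∈ K, ∃ ξ : Fin m → EuclideanSpace ℝ (Fin n),
      (∀ i, ξ i ∈ D pbar i) ∧ ¬ (∀ i, ⟪ξ i, q - pbar⟫ < 0)) :
    ∀ q ∈ K, ∀ ζ : Fin m → EuclideanSpace ℝ (Fin n), (∀ i, ζ i ∈ D q i) →
      ¬ (∀ i, 0 < ⟪ζ i, pbar - q⟫) :=
  stmt10_general K Ψ D hconv pbar hpbar hStamp
end

section
/- Closedness of Minty-type solutions under limits: Let K ⊆ ℝⁿ be convex, Ψ : K → ℝᵐ with each Ψᵢ locally Lipschitz admitting a convexificator multifunction q ↦ ∂**Ψᵢ(q) that is locally bounded and has closed graph. Suppose p̄ ∈ K is such that for every q ∈ K and every ζ ∈ ∂**Ψ(q), ⟨ζ, p̄ − q⟩ₘ ∉ int ℝ₊ᵐ (Minty weak VVI). Fix q ∈ K and set q_k := p̄ + λ_k(q − p̄) with λ_k ∈ (0,1], λ_k → 0. If ξ_k ∈ ∂**Ψ(q_k) satisfies ⟨ξ_k, p̄ − q_k⟩ₘ ∉ int ℝ₊ᵐ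 for each k, then some subsequence of (ξ_k) converges to a limit ξ ∈ ∂**Ψ(p̄) with ⟨ξ, q − p̄⟩ₘ ∉ −int ℝ₊ᵐ. -/
open Filter Topology Set
open scoped RealInnerProductSpace

/-!
The bounded sequence `ξ_k` has a convergent subsequence, and since `q_k → p̄` the closed graph
puts its limit in `∂**Ψ(p̄)`. As `p̄ - q_k = -λ_k (q - p̄)` with `λ_k > 0`, the condition on `ξ_k`
says that some `⟪ξ_k i, q - p̄⟫` is nonnegative; this is a closed condition, so the limit inherits it.
-/

theorem exists_strictMono_tendsto_of_forall_norm_le {ι E : Type*} [Finite ι]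
    [NormedAddCommGroup E] [ProperSpace E] (x : ℕ → ι → E) (d : ℝ)
    (hx : ∀ k i, ‖x k i‖ ≤ d) :
    ∃ ξ : ι → E, ∃ φ : ℕ → ℕ, StrictMono φ ∧ Tendsto (x ∘ φ) atTop (𝓝 ξ) := by
  have hcompact : IsCompact (univ.pi fun _ : ι => Metric.closedBall (0 : E) d) :=
    isCompact_univ_pi fun _ => isCompact_closedBall _ _
  obtain ⟨ξ, -, φ, hφ, hlim⟩ := hcompact.tendsto_subseq fun k i _ =>
    mem_closedBall_zero_iff.2 (hx k i)
  exact ⟨ξ, φ, hφ, hlim⟩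

section InnerProduct

variable {ι E : Type*} [NormedAddCommGroup E] [InnerProductSpace ℝ E]

theorem inner_sub_add_smul (ξ p v : E) (t : ℝ) :
    ⟪ξ, p - (p + t • v)⟫ = -(t * ⟪ξ, v⟫) := by
  rw [sub_add_cancel_left, ← smul_neg, inner_smul_right, inner_neg_right, mul_neg]

theorem exists_inner_nonneg_of_not_forall_inner_sub_add_smul_pos {ξ : ι → E} {p v : E}
    {t : ℝ} (ht : 0 < t) (h : ¬ ∀ i, 0 < ⟪ξ i, p - (p + t • v)⟫) :
    ∃ i, 0 ≤ ⟪ξ i, v⟫ := by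
  contrapose! h
  intro i
  rw [inner_sub_add_smul]
  nlinarith [h i]

theorem isClosed_setOf_exists_inner_nonneg [Finite ι] (v : E) :
    IsClosed {ζ : ι → E | ∃ i, 0 ≤ ⟪ζ i, v⟫} := by
  simp only [ofPred_exists]
  exact isClosed_iUnion_of_finite fun i =>
    isClosed_le continuous_const ((continuous_apply i).inner continuous_const)

end InnerProduct

theorem stmt16_general {n m : ℕ}
    (D : EuclideanSpace ℝ (Fin n) → Fin m → Set (EuclideanSpace ℝ (Fin n)))
    (pbar : EuclideanSpace ℝ (Fin n))
    (q : EuclideanSpace ℝ (Fin n))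
    (lam : ℕ → ℝ) (hlam : ∀ k, lam k ∈ Set.Ioc (0:ℝ) 1)
    (hlam0 : Tendsto lam atTop (𝓝 0))
    (qk : ℕ → EuclideanSpace ℝ (Fin n))
    (hqk : ∀ k, qk k = pbar + lam k • (q - pbar))
    (xi : ℕ → Fin m → EuclideanSpace ℝ (Fin n))
    (hximem : ∀ k, ∀ i, xi k i ∈ D (qk k) i)
    (d : ℝ) (hbdd : ∀ k, ∀ i, ‖xi k i‖ ≤ d)
    (hclosedgraph : ∀ i, ∀ (z u : ℕ → EuclideanSpace ℝ (Fin n))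
      (z₀ u₀ : EuclideanSpace ℝ (Fin n)), Tendsto z atTop (𝓝 z₀) →
      Tendsto u atTop (𝓝 u₀) → (∀ k, u k ∈ D (z k) i) → u₀ ∈ D z₀ i)
    (hxi : ∀ k, ¬ (∀ i, 0 < ⟪xi k i, pbar - qk k⟫)) :
    ∃ φ : ℕ → ℕ, StrictMono φ ∧ ∃ ξ : Fin m → EuclideanSpace ℝ (Fin n),
      (∀ i, Tendsto (fun k => xi (φ k) i) atTop (𝓝 (ξ i))) ∧
      (∀ i, ξ i ∈ D pbar i) ∧ ¬ (∀ i, ⟪ξ i, q - pbar⟫ < 0) := by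
  obtain ⟨ξ, φ, hφ, hlim⟩ := exists_strictMono_tendsto_of_forall_norm_le xi d hbdd
  have hlim_i : ∀ i, Tendsto (fun k => xi (φ k) i) atTop (𝓝 (ξ i)) := tendsto_pi_nhds.1 hlim
  have hqk_lim : Tendsto qk atTop (𝓝 pbar) := by
    have := tendsto_const_nhds (x := pbar).add (hlam0.smul_const (q - pbar))
    rwa [zero_smul, add_zero, ← funext hqk] at this
  refine ⟨φ, hφ, ξ, hlim_i, fun i => hclosedgraph i _ _ pbar (ξ i)
    (hqk_lim.comp hφ.tendsto_atTop) (hlim_i i) fun k => hximem (φ k) i, ?_⟩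
  have hmem : ∀ k, ∃ i, 0 ≤ ⟪xi k i, q - pbar⟫ := fun k =>
    exists_inner_nonneg_of_not_forall_inner_sub_add_smul_pos (hlam k).1 (hqk k ▸ hxi k)
  obtain ⟨i, hi⟩ := (isClosed_setOf_exists_inner_nonneg (q - pbar)).mem_of_tendsto hlim
    (Eventually.of_forall fun k => hmem (φ k))
  exact fun hneg => (hneg i).not_ge hi

/-- closedness of Minty-type solutions under limits: a bounded
sequence of convexificator elements along q_k = p̄ + λ_k(q−p̄) has a subsequence
converging to an element of ∂**Ψ(p̄) satisfying the Stampacchia weak condition. -/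
theorem stmt16 {n m : ℕ} (K : Set (EuclideanSpace ℝ (Fin n))) (hK : Convex ℝ K)
    (Ψ : EuclideanSpace ℝ (Fin n) → Fin m → ℝ)
    (D : EuclideanSpace ℝ (Fin n) → Fin m → Set (EuclideanSpace ℝ (Fin n)))
    (hLip : ∀ i, LocallyLipschitz (fun z => Ψ z i))
    (pbar : EuclideanSpace ℝ (Fin n)) (hpbar : pbar ∈ K)
    (hMinty : ∀ q ∈ K, ∀ ζ : Fin m → EuclideanSpace ℝ (Fin n),
      (∀ i, ζ i ∈ D q i) → ¬ (∀ i, 0 < ⟪ζ i, pbar - q⟫))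
    (q : EuclideanSpace ℝ (Fin n)) (hq : q ∈ K)
    (lam : ℕ → ℝ) (hlam : ∀ k, lam k ∈ Set.Ioc (0:ℝ) 1)
    (hlam0 : Tendsto lam atTop (𝓝 0))
    (qk : ℕ → EuclideanSpace ℝ (Fin n))
    (hqk : ∀ k, qk k = pbar + lam k • (q - pbar))
    (xi : ℕ → Fin m → EuclideanSpace ℝ (Fin n))
    (hximem : ∀ k, ∀ i, xi k i ∈ D (qk k) i)
    (d : ℝ) (hbdd : ∀ k, ∀ i, ‖xi k i‖ ≤ d)
    (hclosedgraph : ∀ i, ∀ (z u : ℕ → EuclideanSpace ℝ (Fin n))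
      (z₀ u₀ : EuclideanSpace ℝ (Fin n)), Tendsto z atTop (𝓝 z₀) →
      Tendsto u atTop (𝓝 u₀) → (∀ k, u k ∈ D (z k) i) → u₀ ∈ D z₀ i)
    (hxi : ∀ k, ¬ (∀ i, 0 < ⟪xi k i, pbar - qk k⟫)) :
    ∃ φ : ℕ → ℕ, StrictMono φ ∧ ∃ ξ : Fin m → EuclideanSpace ℝ (Fin n),
      (∀ i, Tendsto (fun k => xi (φ k) i) atTop (𝓝 (ξ i))) ∧
      (∀ i, ξ i ∈ D pbar i) ∧ ¬ (∀ i, ⟪ξ i, q - pbar⟫ < 0) :=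
  stmt16_general D pbar q lam hlam hlam0 qk hqk xi hximem d hbdd hclosedgraph hxi
end

section
/- Scalar case of the monotonicity characterization: Let K ⊆ ℝⁿ be convex and Ψ : K → ℝ admit a nonempty convexificator ∂**Ψ(p) at each p ∈ K satisfying the mean value property (for all p,q ∈ K there exist w on the open segment (p,q) and ξ ∈ co ∂**Ψ(w) with Ψ(q) − Ψ(p) = ⟨ξ, q−p⟩). If ∂**Ψ is monotone on K (⟨ξ − ζ, p − q⟩ ≥ 0 for all p,q ∈ K, ξ ∈ ∂**Ψ(p), ζ ∈ ∂**Ψ(q)), then Ψ is ∂**-convex on K: Ψ(p) − Ψ(q) ≥ ⟨ζ, p − q⟩ for all p,q ∈ K and ζ ∈ ∂**Ψ(q). -/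
open Filter Topology Set
open scoped RealInnerProductSpace

/-! The mean value property gives `Ψ p - Ψ q = ⟪ξ, p - q⟫` with `ξ ∈ co ∂**Ψ(w)` for some
`w = q + t (p - q)`, `t > 0`. Monotonicity between `w` and `q` passes to the convex hull because
half-spaces are convex, so `t ⟪ξ - ζ, p - q⟫ ≥ 0`, and dividing by `t` gives the claim. -/

section InnerProductSpace

variable {E : Type*} [NormedAddCommGroup E] [InnerProductSpace ℝ E]

theorem le_inner_of_mem_convexHull {s : Set E} {v x : E} {c : ℝ}
    (h : ∀ y ∈ s, c ≤ ⟪y, v⟫) (hx : x ∈ convexHull ℝ s) : c ≤ ⟪x, v⟫ :=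
  convexHull_min h (convex_halfSpace_ge (innerₛₗ ℝ |>.flip v).isLinear c) hx

theorem exists_pos_smul_sub_of_mem_openSegment {p q w : E} (hw : w ∈ openSegment ℝ q p) :
    ∃ t : ℝ, 0 < t ∧ w - q = t • (p - q) := by
  rw [openSegment_eq_image'] at hw
  obtain ⟨t, ⟨ht, -⟩, rfl⟩ := hw
  exact ⟨t, ht, add_sub_cancel_left q _⟩

end InnerProductSpace

theorem stmt17_general {n : ℕ} (K : Set (EuclideanSpace ℝ (Fin n))) (hK : Convex ℝ K)
    (Ψ : EuclideanSpace ℝ (Fin n) → ℝ)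
    (D : EuclideanSpace ℝ (Fin n) → Set (EuclideanSpace ℝ (Fin n)))
    (hmvt : ∀ p ∈ K, ∀ q ∈ K, ∃ w ∈ openSegment ℝ p q,
      ∃ ξ ∈ convexHull ℝ (D w), Ψ q - Ψ p = ⟪ξ, q - p⟫)
    (hmono : ∀ p ∈ K, ∀ q ∈ K, ∀ ξ ∈ D p, ∀ ζ ∈ D q, 0 ≤ ⟪ξ - ζ, p - q⟫) :
    ∀ p ∈ K, ∀ q ∈ K, ∀ ζ ∈ D q, ⟪ζ, p - q⟫ ≤ Ψ p - Ψ q := by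
  intro p hp q hq ζ hζ
  obtain ⟨w, hw, ξ, hξ, hΨ⟩ := hmvt q hq p hp
  obtain ⟨t, ht, hwq⟩ := exists_pos_smul_sub_of_mem_openSegment hw
  have hwK : w ∈ K := hK.openSegment_subset hq hp hw
  have hmono_hull : ⟪ζ, w - q⟫ ≤ ⟪ξ, w - q⟫ :=
    le_inner_of_mem_convexHull (fun x hx => by
      simpa [inner_sub_left] using hmono w hwK q hq x hx ζ hζ) hξ
  rw [hwq, real_inner_smul_right, real_inner_smul_right] at hmono_hull
  rw [hΨ]
  exact le_of_mul_le_mul_left hmono_hull ht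

/-- scalar case: monotonicity of the convexificator map together
with the mean value property implies ∂**-convexity. -/
theorem stmt17 {n : ℕ} (K : Set (EuclideanSpace ℝ (Fin n))) (hK : Convex ℝ K)
    (Ψ : EuclideanSpace ℝ (Fin n) → ℝ)
    (D : EuclideanSpace ℝ (Fin n) → Set (EuclideanSpace ℝ (Fin n)))
    (hne : ∀ p ∈ K, (D p).Nonempty)
    (hmvt : ∀ p ∈ K, ∀ q ∈ K, ∃ w ∈ openSegment ℝ p q,
      ∃ ξ ∈ convexHull ℝ (D w), Ψ q - Ψ p = ⟪ξ, q - p⟫)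
    (hmono : ∀ p ∈ K, ∀ q ∈ K, ∀ ξ ∈ D p, ∀ ζ ∈ D q, 0 ≤ ⟪ξ - ζ, p - q⟫) :
    ∀ p ∈ K, ∀ q ∈ K, ∀ ζ ∈ D q, ⟪ζ, p - q⟫ ≤ Ψ p - Ψ q :=
  stmt17_general K hK Ψ D hmvt hmono
end
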